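/- arXiv:2410.06824 — 2 statements merged into one kernel-verified Lean document; each statement's English description precedes it below -/
import Mathlib

section
/- Let X = [[1,0],[0,-1]], Y = [[0,1],[1,0]], Z = [[0,1],[-1,0]] be real 2×2 matrices. Then for all r, φ, θ ∈ ℝ, the matrix [[cosh(r)·cos(θ) + sinh(r)·cos(φ+θ), cosh(r)·sin(θ) + sinh(r)·sin(φ+θ)], [−cosh(r)·sin(θ) + sinh(r)·sin(φ+θ), cosh(r)·cos(θ) − sinh(r)·cos(φ+θ)]] equals the product exp(r·cos(φ)·X + r·sin(φ)·Y) · exp(θ·Z) of matrix exponentials. Equivalently, with Ψ : ℂ² → M₂(ℝ) defined by Ψ(x₁+iy₁, x₂+iy₂) = [[x₁+x₂, y₁+y₂],[y₁−y₂, x₂−x₁]], one has Ψ(sinh(r)·e^{i(φ+θ)}, cosh(r)·e^{iθ}) = exp(r·cos(φ)·X + r·sin(φ)·Y) · exp(θ·Z). -/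
/-! If `M * M = 1` (resp. `M * M = -1`), the even and odd parts of the exponential series of
`t • M` are the Taylor series of `cosh t` and `sinh t` (resp. `cos t` and `sin t`), so
`exp (t • M) = cosh t + sinh t • M` (resp. `cos t + sin t • M`). The matrix
`cos φ • X + sin φ • Y` is a reflection and `Z` squares to `-1`, so both factors have closed
forms, which multiply out by the addition formulas. -/

open Real Matrix

/-- The identification of anti-de Sitter space `AdS³ ⊂ ℂ²` with `SL(2,ℝ)`. -/
noncomputable def Psi (z : ℂ × ℂ) : Matrix (Fin 2) (Fin 2) ℝ :=
  !![z.1.re + z.2.re, z.1.im + z.2.im; z.1.im - z.2.im, z.2.re - z.1.re]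

section ExpSmulOfMulSelf

variable {A : Type*} [Ring A] [Algebra ℝ A] [TopologicalSpace A] [IsTopologicalRing A]
  [ContinuousSMul ℝ A] [T2Space A]

theorem exp_smul_of_mul_self_eq_one {M : A} (hM : M * M = 1) (t : ℝ) :
    NormedSpace.exp (t • M) = cosh t • (1 : A) + sinh t • M := by
  have hpow (n : ℕ) : M ^ (2 * n) = 1 := by rw [pow_mul, sq, hM, one_pow]
  rw [NormedSpace.exp_eq_tsum ℝ]
  refine HasSum.tsum_eq (HasSum.even_add_odd ?_ ?_)
  · convert (hasSum_cosh t).smul_const (1 : A) using 2 with n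
    rw [smul_pow, hpow, smul_smul, div_eq_inv_mul]
  · convert (hasSum_sinh t).smul_const M using 2 with n
    rw [smul_pow, pow_succ M, hpow, one_mul, smul_smul, div_eq_inv_mul]

theorem exp_smul_of_mul_self_eq_neg_one {M : A} (hM : M * M = -1) (t : ℝ) :
    NormedSpace.exp (t • M) = cos t • (1 : A) + sin t • M := by
  have hpow (n : ℕ) : M ^ (2 * n) = ((-1 : ℝ) ^ n) • 1 := by
    rw [pow_mul, sq, hM, ← neg_one_smul ℝ (1 : A), smul_pow, one_pow]
  rw [NormedSpace.exp_eq_tsum ℝ]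
  refine HasSum.tsum_eq (HasSum.even_add_odd ?_ ?_)
  · convert (hasSum_cos t).smul_const (1 : A) using 2 with n
    rw [smul_pow, hpow, smul_smul, smul_smul]
    ring_nf
  · convert (hasSum_sin t).smul_const M using 2 with n
    rw [smul_pow, pow_succ M, hpow, smul_mul_assoc, one_mul, smul_smul, smul_smul]
    ring_nf

end ExpSmulOfMulSelf

theorem exp_smul_reflection (r φ : ℝ) :
    NormedSpace.exp (r • !![cos φ, sin φ; sin φ, -cos φ]) =
      !![cosh r + sinh r * cos φ, sinh r * sin φ; sinh r * sin φ, cosh r - sinh r * cos φ] := by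
  have hsq : !![cos φ, sin φ; sin φ, -cos φ] * !![cos φ, sin φ; sin φ, -cos φ] =
      (1 : Matrix (Fin 2) (Fin 2) ℝ) := by
    rw [mul_fin_two, one_fin_two]
    simp [← sq, mul_comm (cos φ)]
  rw [exp_smul_of_mul_self_eq_one hsq, one_fin_two]
  simp [← sub_eq_add_neg]

theorem exp_smul_rotationGenerator (θ : ℝ) :
    NormedSpace.exp (θ • !![0, 1; -1, 0]) = !![cos θ, sin θ; -sin θ, cos θ] := by
  have hsq : !![0, 1; -1, 0] * !![0, 1; -1, 0] = (-1 : Matrix (Fin 2) (Fin 2) ℝ) := by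
    simp [one_fin_two]
  rw [exp_smul_of_mul_self_eq_neg_one hsq, one_fin_two]
  simp

theorem Psi_ofReal_mul_exp (a b α β : ℝ) :
    Psi ((a : ℂ) * Complex.exp (Complex.I * α), (b : ℂ) * Complex.exp (Complex.I * β)) =
      !![b * cos β + a * cos α, b * sin β + a * sin α;
        -b * sin β + a * sin α, b * cos β - a * cos α] := by
  simp [Psi, mul_comm Complex.I, Complex.exp_mul_I, Complex.mul_re, Complex.mul_im,
    Complex.cos_ofReal_re, Complex.sin_ofReal_re]
  exact ⟨⟨add_comm _ _, add_comm _ _⟩, sub_eq_neg_add _ _⟩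

/-- For `X = [[1,0],[0,-1]]`, `Y = [[0,1],[1,0]]`, `Z = [[0,1],[-1,0]]` and all `r, φ, θ ∈ ℝ`,
the matrix
`[[cosh r cos θ + sinh r cos(φ+θ), cosh r sin θ + sinh r sin(φ+θ)],
  [−cosh r sin θ + sinh r sin(φ+θ), cosh r cos θ − sinh r cos(φ+θ)]]`
equals `exp(r cos φ · X + r sin φ · Y) · exp(θ·Z)`; equivalently
`Ψ(sinh r · e^{i(φ+θ)}, cosh r · e^{iθ}) = exp(r cos φ · X + r sin φ · Y) · exp(θ·Z)`. -/
theorem ads_coordinates_eq_exp_mul_exp (r φ θ : ℝ) :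
    (!![Real.cosh r * Real.cos θ + Real.sinh r * Real.cos (φ + θ),
        Real.cosh r * Real.sin θ + Real.sinh r * Real.sin (φ + θ);
        -Real.cosh r * Real.sin θ + Real.sinh r * Real.sin (φ + θ),
        Real.cosh r * Real.cos θ - Real.sinh r * Real.cos (φ + θ)] : Matrix (Fin 2) (Fin 2) ℝ)
      = NormedSpace.exp
          ((r * Real.cos φ) • (!![1, 0; 0, -1] : Matrix (Fin 2) (Fin 2) ℝ)
            + (r * Real.sin φ) • (!![0, 1; 1, 0] : Matrix (Fin 2) (Fin 2) ℝ))
        * NormedSpace.exp (θ • (!![0, 1; -1, 0] : Matrix (Fin 2) (Fin 2) ℝ)) ∧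
    Psi ((Real.sinh r : ℂ) * Complex.exp (Complex.I * (φ + θ)),
         (Real.cosh r : ℂ) * Complex.exp (Complex.I * θ))
      = NormedSpace.exp
          ((r * Real.cos φ) • (!![1, 0; 0, -1] : Matrix (Fin 2) (Fin 2) ℝ)
            + (r * Real.sin φ) • (!![0, 1; 1, 0] : Matrix (Fin 2) (Fin 2) ℝ))
        * NormedSpace.exp (θ • (!![0, 1; -1, 0] : Matrix (Fin 2) (Fin 2) ℝ)) := by
  have hXY : (r * cos φ) • !![1, 0; 0, -1] + (r * sin φ) • !![0, 1; 1, 0] =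
      r • !![cos φ, sin φ; sin φ, -cos φ] := by
    simp [mul_comm r]
  have hexp : NormedSpace.exp ((r * cos φ) • !![1, 0; 0, -1] + (r * sin φ) • !![0, 1; 1, 0]) *
      NormedSpace.exp (θ • !![0, 1; -1, 0]) =
      !![cosh r * cos θ + sinh r * cos (φ + θ), cosh r * sin θ + sinh r * sin (φ + θ);
        -cosh r * sin θ + sinh r * sin (φ + θ), cosh r * cos θ - sinh r * cos (φ + θ)] := by
    rw [hXY, exp_smul_reflection, exp_smul_rotationGenerator, mul_fin_two, cos_add, sin_add]
    simp only [EmbeddingLike.apply_eq_iff_eq, vecCons_inj, and_true]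
    refine ⟨⟨?_, ?_⟩, ?_, ?_⟩ <;> ring
  refine ⟨hexp.symm, ?_⟩
  rw [← Complex.ofReal_add, Psi_ofReal_mul_exp, hexp]
end

section
/- Let Z = [[0,1],[-1,0]] and let Ψ : ℂ² → M₂(ℝ) be defined by Ψ(x₁+iy₁, x₂+iy₂) = [[x₁+x₂, y₁+y₂],[y₁−y₂, x₂−x₁]]. Then for all z₁, z₂ ∈ ℂ and all θ ∈ ℝ, Ψ(e^{iθ}·z₁, e^{iθ}·z₂) = Ψ(z₁, z₂) · exp(θ·Z), where exp denotes the matrix exponential and the product on the right is matrix multiplication. -/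
open Real

/-!
`Ψ` turns multiplication of both coordinates by `w ∈ ℂ` into right multiplication by
`ρ(w) = [[Re w, Im w], [-Im w, Re w]]`, the matrix of multiplication by `conj w` in the basis
`1, i`. Since `ρ` is a continuous `ℝ`-algebra homomorphism `ℂ → M₂(ℝ)` it commutes with the
exponential, and `θZ = ρ(iθ)`, so `exp(θZ) = ρ(e^{iθ})`.
-/

-- `NormedSpace.map_exp` needs a norm on the target; any norm induces the product topology.
attribute [local instance] Matrix.linftyOpNormedRing

namespace Complex

noncomputable def conjLeftMulMatrix : ℂ →ₐ[ℝ] Matrix (Fin 2) (Fin 2) ℝ :=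
  (Algebra.leftMulMatrix basisOneI).comp (conjAe : ℂ →ₐ[ℝ] ℂ)

theorem conjLeftMulMatrix_apply (w : ℂ) :
    conjLeftMulMatrix w = !![w.re, w.im; -w.im, w.re] := by
  simp [conjLeftMulMatrix, Algebra.leftMulMatrix_complex]

theorem continuous_conjLeftMulMatrix : Continuous conjLeftMulMatrix :=
  conjLeftMulMatrix.toLinearMap.continuous_of_finiteDimensional

theorem exp_conjLeftMulMatrix (w : ℂ) :
    NormedSpace.exp (conjLeftMulMatrix w) = conjLeftMulMatrix (exp w) := by
  rw [exp_eq_exp_ℂ]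
  exact (NormedSpace.map_exp _ continuous_conjLeftMulMatrix w).symm

theorem conjLeftMulMatrix_I_mul_ofReal (θ : ℝ) :
    conjLeftMulMatrix (I * θ) = θ • !![0, 1; -1, 0] := by
  simp [conjLeftMulMatrix_apply]

end Complex

open Complex in
theorem Psi_mul_mul (w z₁ z₂ : ℂ) :
    Psi (w * z₁, w * z₂) = Psi (z₁, z₂) * conjLeftMulMatrix w := by
  rw [conjLeftMulMatrix_apply]
  ext i j
  fin_cases i <;> fin_cases j <;> simp [Psi, Matrix.mul_apply] <;> ring

/-- Equivariance of `Ψ` under the circle action: for all `z₁, z₂ ∈ ℂ` and `θ ∈ ℝ`,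
`Ψ(e^{iθ}z₁, e^{iθ}z₂) = Ψ(z₁, z₂) · exp(θ·Z)` with `Z = [[0,1],[-1,0]]`. -/
theorem Psi_circle_equivariant (z₁ z₂ : ℂ) (θ : ℝ) :
    Psi (Complex.exp (Complex.I * θ) * z₁, Complex.exp (Complex.I * θ) * z₂)
      = Psi (z₁, z₂) * NormedSpace.exp (θ • (!![0, 1; -1, 0] : Matrix (Fin 2) (Fin 2) ℝ)) := by
  rw [← Complex.conjLeftMulMatrix_I_mul_ofReal, Complex.exp_conjLeftMulMatrix, Psi_mul_mul]
end
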